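/- arXiv:2010.13708 — 3 statements merged into one kernel-verified Lean document; each statement's English description precedes it below -/
import Mathlib

section
/- Let q be a weakly positive unit integral quadratic form on ℤ^n with n ≥ 2, let e_i be the i-th standard basis vector (a simple root), and let z be a sincere positive root of q. Then 2(e_i, z) ∈ {0, 1, −1}, where (·,·) is the symmetric bilinear form associated to q. -/
def unitForm (n : ℕ) (c : Fin n → Fin n → ℤ) (x : Fin n → ℤ) : ℤ :=
  ∑ i, x i ^ 2 + ∑ i, ∑ j, if i < j then c i j * x i * x j else 0

def twoBil (n : ℕ) (c : Fin n → Fin n → ℤ) (x y : Fin n → ℤ) : ℤ :=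
  unitForm n c (x + y) - unitForm n c x - unitForm n c y

lemma bil_formula (n : ℕ) (c : Fin n → Fin n → ℤ) (x y : Fin n → ℤ) :
    twoBil n c x y = ∑ j, 2 * x j * y j
      + ∑ a, ∑ b, if a < b then c a b * (x a * y b + x b * y a) else 0 := by
  unfold twoBil unitForm
  simp only [Pi.add_apply]
  have e1 : (∑ k, (x k + y k) ^ 2) - (∑ k, x k ^ 2) - (∑ k, y k ^ 2)
      = ∑ k, 2 * x k * y k := by
    rw [← Finset.sum_sub_distrib, ← Finset.sum_sub_distrib]
    exact Finset.sum_congr rfl fun k _ => by ring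
  have e2 : (∑ a, ∑ b, if a < b then c a b * (x a + y a) * (x b + y b) else 0)
      - (∑ a, ∑ b, if a < b then c a b * x a * x b else 0)
      - (∑ a, ∑ b, if a < b then c a b * y a * y b else 0)
      = ∑ a, ∑ b, if a < b then c a b * (x a * y b + x b * y a) else 0 := by
    rw [← Finset.sum_sub_distrib, ← Finset.sum_sub_distrib]
    refine Finset.sum_congr rfl fun a _ => ?_
    rw [← Finset.sum_sub_distrib, ← Finset.sum_sub_distrib]
    refine Finset.sum_congr rfl fun b _ => ?_
    split_ifs <;> ring
  linarith [e1, e2]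

lemma bil_neg_left (n : ℕ) (c : Fin n → Fin n → ℤ) (x y : Fin n → ℤ) :
    twoBil n c (-x) y = -twoBil n c x y := by
  rw [bil_formula, bil_formula, neg_add]
  congr 1
  · rw [← Finset.sum_neg_distrib]
    exact Finset.sum_congr rfl fun j _ => by simp only [Pi.neg_apply]; ring
  · rw [← Finset.sum_neg_distrib]
    refine Finset.sum_congr rfl fun a _ => ?_
    rw [← Finset.sum_neg_distrib]
    refine Finset.sum_congr rfl fun b _ => ?_
    simp only [Pi.neg_apply]; split_ifs <;> ring

lemma unitForm_single (n : ℕ) (c : Fin n → Fin n → ℤ) (i : Fin n) (a : ℤ) :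
    unitForm n c (Pi.single i a) = a ^ 2 := by
  unfold unitForm
  have h1 : ∑ j, (Pi.single i a : Fin n → ℤ) j ^ 2 = a ^ 2 := by
    rw [Finset.sum_eq_single i]
    · simp
    · intro b _ hb; simp [Pi.single_apply, hb]
    · simp
  have h2 : ∑ p : Fin n, ∑ q : Fin n,
      (if p < q then c p q * (Pi.single i a : Fin n → ℤ) p * (Pi.single i a : Fin n → ℤ) q else 0) = 0 := by
    refine Finset.sum_eq_zero fun p _ => Finset.sum_eq_zero fun q _ => ?_
    simp only [Pi.single_apply]
    by_cases hpq : p < q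
    · by_cases hp : p = i
      · by_cases hq : q = i
        · exfalso; rw [hp] at hpq; rw [hq] at hpq; exact lt_irrefl _ hpq
        · simp [hpq, hp, hq]
      · simp [hpq, hp]
    · simp [hpq]
  rw [h1, h2, add_zero]

/-- If `q` is a weakly positive unit integral quadratic form on `ℤ^n`, `n ≥ 2`,
`e_i` is a simple root and `z` is a sincere positive root of `q`,
then `2(e_i, z) ∈ {0, 1, -1}`. -/
theorem stmt_0 (n : ℕ) (hn : 2 ≤ n) (c : Fin n → Fin n → ℤ)
    (hwp : ∀ x : Fin n → ℤ, (∀ j, 0 ≤ x j) → x ≠ 0 → 0 < unitForm n c x)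
    (z : Fin n → ℤ) (hzpos : ∀ j, 0 ≤ z j) (hznz : z ≠ 0)
    (hsincere : ∀ j, z j ≠ 0) (hroot : unitForm n c z = 1) (i : Fin n) :
    twoBil n c (Pi.single i 1) z ∈ ({0, 1, -1} : Set ℤ) := by
  set e : Fin n → ℤ := Pi.single i 1 with he
  set t : ℤ := twoBil n c e z with ht
  have hqe : unitForm n c e = 1 := by rw [he, unitForm_single]; norm_num
  have hqne : unitForm n c (-e) = 1 := by
    have : -e = Pi.single i (-1 : ℤ) := by
      funext j; by_cases h : j = i <;> simp [he, Pi.single_apply, h]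
    rw [this, unitForm_single]; norm_num
  -- exists j ≠ i
  obtain ⟨j, hj⟩ : ∃ j : Fin n, j ≠ i := by
    have hcard : 1 < Fintype.card (Fin n) := by simp; omega
    exact Fintype.exists_ne_of_one_lt_card hcard i
  have hzi : 1 ≤ z i := lt_of_le_of_ne (hzpos i) (Ne.symm (hsincere i))
  -- q(e + z) = 2 + t > 0
  have h1 : unitForm n c (e + z) = 2 + t := by
    have := ht; unfold twoBil at this; omega
  have hp1 : 0 < unitForm n c (e + z) := by
    refine hwp _ (fun k => ?_) ?_
    · have := hzpos k
      by_cases h : k = i <;> simp [he, Pi.single_apply, h] <;> omega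
    · intro h
      have := congrFun h j
      simp [he, Pi.single_apply, hj] at this
      exact hsincere j this
  -- q(-e + z) = 2 - t > 0
  have h2 : unitForm n c (-e + z) = 2 - t := by
    have h3 : twoBil n c (-e) z = -t := by rw [bil_neg_left, ht]
    unfold twoBil at h3; omega
  have hp2 : 0 < unitForm n c (-e + z) := by
    refine hwp _ (fun k => ?_) ?_
    · have := hzpos k
      by_cases h : k = i <;> simp [he, Pi.single_apply, h] <;> omega
    · intro h
      have := congrFun h j
      simp [he, Pi.single_apply, hj] at this
      exact hsincere j this
  rw [h1] at hp1; rw [h2] at hp2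
  simp only [Set.mem_insert_iff, Set.mem_singleton_iff]
  omega
end

section
/- Let q be a weakly positive unit integral quadratic form on ℤ^n with n ≥ 2, let e_i be the i-th standard basis vector (a simple root), and let z be a sincere positive root of q. Then z − 2(e_i, z)·e_i is again a positive root of q, where (·,·) is the symmetric bilinear form associated to q. -/
/-- The reflection `z - 2(e_i, z)·e_i` of `z` at the simple root `e_i`. -/
def reflect (n : ℕ) (c : Fin n → Fin n → ℤ) (z : Fin n → ℤ) (i : Fin n) : Fin n → ℤ :=
  z - twoBil n c (Pi.single i 1) z • Pi.single i 1


lemma key (n : ℕ) (c : Fin n → Fin n → ℤ) (z : Fin n → ℤ) (i : Fin n) (s : ℤ) :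
    unitForm n c (z + s • Pi.single i 1) = unitForm n c z + s ^ 2 +
      s * (2 * z i + ((∑ j, if j < i then c j i * z j else 0)
        + ∑ k, if i < k then c i k * z k else 0)) := by
  unfold unitForm
  simp only [Pi.add_apply, Pi.smul_apply, Pi.single_apply, smul_eq_mul, mul_ite, mul_one, mul_zero]
  have h1 : ∑ j, (z j + if j = i then s else 0) ^ 2
      = (∑ j, z j ^ 2) + (2 * s * z i + s ^ 2) := by
    have : ∀ j : Fin n, (z j + if j = i then s else 0) ^ 2
        = z j ^ 2 + (if j = i then 2 * s * z j + s ^ 2 else 0) := by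
      intro j; split <;> ring
    rw [Finset.sum_congr rfl fun j _ => this j, Finset.sum_add_distrib,
      Finset.sum_ite_eq' Finset.univ i]
    simp
  have h2 : ∀ j k : Fin n,
      (if j < k then c j k * (z j + if j = i then s else 0) * (z k + if k = i then s else 0) else 0)
      = (if j < k then c j k * z j * z k else 0)
        + (if j = i then (if j < k then s * (c j k * z k) else 0) else 0)
        + (if k = i then (if j < k then s * (c j k * z j) else 0) else 0) := by
    intro j k
    by_cases h1 : j < k
    · by_cases h2 : j = i
      · by_cases h3 : k = i
        · exfalso; rw [h2, h3] at h1; exact lt_irrefl i h1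
        · simp [h1, h2, h3]; split <;> ring
      · by_cases h3 : k = i <;> simp [h1, h2, h3] <;> try (split <;> ring)
    · simp [h1]
  rw [show (∑ j, ∑ k, if j < k then c j k * (z j + if j = i then s else 0) * (z k + if k = i then s else 0) else 0) = _ from Finset.sum_congr rfl fun j _ => Finset.sum_congr rfl fun k _ => h2 j k]
  simp only [Finset.sum_add_distrib]
  have h3 : ∑ j : Fin n, ∑ k : Fin n, (if j = i then (if j < k then s * (c j k * z k) else 0) else 0)
      = s * ∑ k, if i < k then c i k * z k else 0 := by
    have : ∀ j : Fin n, ∑ k : Fin n, (if j = i then (if j < k then s * (c j k * z k) else 0) else 0)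
        = if j = i then ∑ k : Fin n, (if j < k then s * (c j k * z k) else 0) else 0 := by
      intro j; split <;> simp
    rw [Finset.sum_congr rfl fun j _ => this j, Finset.sum_ite_eq' Finset.univ i]
    simp [Finset.mul_sum, mul_ite]
  have h4 : ∑ j : Fin n, ∑ k : Fin n, (if k = i then (if j < k then s * (c j k * z j) else 0) else 0)
      = s * ∑ j, if j < i then c j i * z j else 0 := by
    rw [Finset.sum_comm]
    have : ∀ k : Fin n, ∑ j : Fin n, (if k = i then (if j < k then s * (c j k * z j) else 0) else 0)
        = if k = i then ∑ j : Fin n, (if j < k then s * (c j k * z j) else 0) else 0 := by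
      intro k; split <;> simp
    rw [Finset.sum_congr rfl fun k _ => this k, Finset.sum_ite_eq' Finset.univ i]
    simp [Finset.mul_sum, mul_ite]
  rw [h1, h3, h4]
  ring

/-- If `q` is a weakly positive unit integral quadratic form on `ℤ^n`, `n ≥ 2`,
`e_i` is a simple root and `z` is a sincere positive root of `q`,
then `z - 2(e_i, z)·e_i` is again a positive root of `q`. -/
theorem stmt_1 (n : ℕ) (hn : 2 ≤ n) (c : Fin n → Fin n → ℤ)
    (hwp : ∀ x : Fin n → ℤ, (∀ j, 0 ≤ x j) → x ≠ 0 → 0 < unitForm n c x)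
    (z : Fin n → ℤ) (hzpos : ∀ j, 0 ≤ z j) (hznz : z ≠ 0)
    (hsincere : ∀ j, z j ≠ 0) (hroot : unitForm n c z = 1) (i : Fin n) :
    (∀ j, 0 ≤ reflect n c z i j) ∧ reflect n c z i ≠ 0 ∧
    unitForm n c (reflect n c z i) = 1 := by
  set L : ℤ := (∑ j, if j < i then c j i * z j else 0) + ∑ k, if i < k then c i k * z k else 0 with hL
  have hsingle : unitForm n c (Pi.single i 1) = 1 := by
    unfold unitForm
    have h1 : ∑ j : Fin n, (Pi.single i 1 : Fin n → ℤ) j ^ 2 = 1 := by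
      simp [Pi.single_apply, ite_pow, Finset.sum_ite_eq']
    have h2 : ∑ j : Fin n, ∑ k : Fin n,
        (if j < k then c j k * (Pi.single i 1 : Fin n → ℤ) j * (Pi.single i 1 : Fin n → ℤ) k else 0) = 0 := by
      apply Finset.sum_eq_zero; intro j _
      apply Finset.sum_eq_zero; intro k _
      by_cases hj : j = i
      · subst hj
        by_cases hk : k = j
        · subst hk; simp
        · simp [Pi.single_apply, hk]
      · simp [Pi.single_apply, hj]
    rw [h1, h2]; ring
  have ht : twoBil n c (Pi.single i 1) z = 2 * z i + L := by
    have := key n c z i 1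
    unfold twoBil
    rw [show Pi.single i 1 + z = z + (1:ℤ) • Pi.single i 1 by rw [one_smul, add_comm], this,
      hsingle]
    ring
  set t : ℤ := twoBil n c (Pi.single i 1) z with htdef
  -- refleection values
  have hrefl : reflect n c z i = z + (-t) • Pi.single i 1 := by
    unfold reflect
    rw [← htdef, sub_eq_add_neg, ← neg_smul]
  have hreflval : ∀ j, reflect n c z i j = z j + (if j = i then -t else 0) := by
    intro j
    rw [hrefl]
    rcases eq_or_ne j i with rfl | hj
    · simp [Pi.single_apply]
    · simp [Pi.single_apply, hj]
  -- there is another index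
  obtain ⟨j0, hj0⟩ : ∃ j0 : Fin n, j0 ≠ i := by
    haveI : Nontrivial (Fin n) := Fin.nontrivial_iff_two_le.mpr hn
    exact exists_ne i
  -- positivity bound: t ≤ z i
  have hzi : 1 ≤ z i := lt_of_le_of_ne (hzpos i) (Ne.symm (hsincere i))
  have hti : t ≤ z i := by
    have hy := hwp (z + (-(z i)) • Pi.single i 1) ?_ ?_
    · rw [key n c z i (-(z i)), hroot, ← hL] at hy
      have ht' : t = 2 * z i + L := ht
      nlinarith
    · intro j
      simp only [Pi.add_apply, Pi.smul_apply, Pi.single_apply, smul_eq_mul, mul_ite, mul_one,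
        mul_zero]
      rcases eq_or_ne j i with rfl | hj
      · simp
      · simpa [hj] using hzpos j
    · intro h0
      have := congrFun h0 j0
      simp [Pi.single_apply, hj0] at this
      exact hsincere j0 this
  refine ⟨?_, ?_, ?_⟩
  · intro j
    rw [hreflval j]
    rcases eq_or_ne j i with rfl | hj
    · simp; linarith
    · simpa [hj] using hzpos j
  · intro h0
    have := congrFun h0 j0
    rw [hreflval j0, if_neg hj0] at this
    exact hsincere j0 (by simpa using this)
  · rw [hrefl, key n c z i (-t), hroot, ← hL]
    have ht' : t = 2 * z i + L := ht
    nlinarith [ht']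
end

section
/- Let Σ̄ be a connected 2-dimensional complex over a bigraph Σ with a fixed base vertex B, and let π : Σ̃̄ → Σ̄ be the universal covering constructed from homotopy classes of walks starting at B. The fundamental group 𝔤 = 𝔤(Σ̄, B) acts on Σ̃̄ by [ω]·[ω_B] = [ωω_B] on vertices (and correspondingly on arrows and 2-cells); this action commutes with the structure maps of Σ̃̄ (source, target, degree, and boundary), so the quotient complex Σ̃̄/𝔤 is defined, and π induces an isomorphism of complexes between Σ̃̄/𝔤 and Σ̄. -/
/-!
Any two walks `μ, μ' : B → Y` differ by a loop at `B`, since `μ' ∼ μ (μ⁻¹ μ')`; so the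
fundamental group acts transitively on the fibres of `π` over vertices and arrows, and
connectedness makes `π` surjective there.

For 2-cells the point is unique path lifting: a walk of `Σ` lifts to `Σ̃` from any vertex over
its start, uniquely. Hence every rotation of the projection of a cycle `θ` of `Σ̃` lifts to a
rotation of `θ`, and two lifts `θ, θ'` of the same boundary cycle become, after rotating `θ`,
cycles with equal projections; translating the base vertex of one onto that of the other by the
group makes them equal. A lift of the boundary of a 2-cell closes up because deleting the
boundary is an elementary homotopy.
-/

/-- A (directed) bigraph: vertices, arrows, source/target maps and a degree map
(`false` = solid arrow, `true` = dotted arrow). -/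
structure Bigraph where
  V : Type
  A : Type
  src : A → V
  tgt : A → V
  deg : A → Bool

namespace Bigraph

/-- Source map of the doubled bigraph `Σ̂` (arrows `Σ₁ ⊔ Σ₁⁻¹`):
`s(x⁻¹) = e(x)`. -/
def dsrc (S : Bigraph) : S.A ⊕ S.A → S.V
  | .inl a => S.src a
  | .inr a => S.tgt a

/-- Target map of the doubled bigraph `Σ̂`: `e(x⁻¹) = s(x)`. -/
def dtgt (S : Bigraph) : S.A ⊕ S.A → S.V
  | .inl a => S.tgt a
  | .inr a => S.src a

end Bigraph

/-- A walk from `X` to `Y` on the bigraph `S`: a composable sequence of arrows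
of the doubled bigraph `Σ̂` (read right-to-left, as compositions). -/
inductive Walk (S : Bigraph) (X : S.V) : S.V → Type
  | nil : Walk S X X
  | cons (x : S.A ⊕ S.A) (ω : Walk S X (S.dsrc x)) : Walk S X (S.dtgt x)

namespace Walk

variable {S : Bigraph}

/-- Composition `ωω'` of walks, defined when `s(ω) = e(ω')`. -/
def comp {X Y : S.V} : {Z : S.V} → Walk S Y Z → Walk S X Y → Walk S X Z
  | _, .nil, ω' => ω'
  | _, .cons x ω, ω' => .cons x (ω.comp ω')

/-- The walk `x x⁻¹` for an arrow `x` of the doubled bigraph. -/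
def retrace (S : Bigraph) (x : S.A ⊕ S.A) : Walk S (S.dtgt x) (S.dtgt x) :=
  match x with
  | .inl a => .cons (.inl a) (.cons (.inr a) .nil)
  | .inr a => .cons (.inr a) (.cons (.inl a) .nil)

/-- Transport a walk along an equality of its target. -/
def castTgt {X Y Y' : S.V} (h : Y = Y') (ω : Walk S X Y) : Walk S X Y' := h ▸ ω

end Walk

/-- A cyclic walk on `S`, together with its base vertex. -/
def CWalk (S : Bigraph) : Type := Σ X : S.V, Walk S X X

/-- One cyclic rotation `ω₁ω₂ ↦ ω₂ω₁` of a cyclic walk. -/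
def RotStep (S : Bigraph) (w w' : CWalk S) : Prop :=
  ∃ (X Y : S.V) (α : Walk S X Y) (β : Walk S Y X),
    w = ⟨X, β.comp α⟩ ∧ w' = ⟨Y, α.comp β⟩

/-- A 2-dimensional complex over the bigraph `S`: a set of 2-cells together with a
boundary map assigning to each 2-cell a cycle (given by a representative cyclic walk). -/
structure TwoComplex (S : Bigraph) where
  Cell : Type
  bdry : Cell → CWalk S

/-- `w` is a representative of the boundary cycle `∂(C)`, i.e. it is cyclically
equivalent to the chosen boundary walk of the 2-cell `C`. -/
def TwoComplex.IsBdry {S : Bigraph} (K : TwoComplex S) (C : K.Cell) (w : CWalk S) : Prop :=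
  Relation.EqvGen (RotStep S) (K.bdry C) w


/-- The homotopy relation on walks of `S` induced by the 2-complex `K`: the relation
generated by sequences of elementary homotopies (cancelling/inserting `x x⁻¹`, and
deleting/inserting a cyclic walk bounding a 2-cell). -/
inductive Homotopic {S : Bigraph} (K : TwoComplex S) :
    {X Y : S.V} → Walk S X Y → Walk S X Y → Prop
  | refl {X Y : S.V} (ω : Walk S X Y) : Homotopic K ω ω
  | trans {X Y : S.V} {ω₁ ω₂ ω₃ : Walk S X Y} :
      Homotopic K ω₁ ω₂ → Homotopic K ω₂ ω₃ → Homotopic K ω₁ ω₃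
  | cancel {X Z : S.V} (x : S.A ⊕ S.A) (ω₁ : Walk S (S.dtgt x) Z) (ω₂ : Walk S X (S.dtgt x)) :
      Homotopic K (ω₁.comp ((Walk.retrace S x).comp ω₂)) (ω₁.comp ω₂)
  | insert {X Z : S.V} (x : S.A ⊕ S.A) (ω₁ : Walk S (S.dtgt x) Z) (ω₂ : Walk S X (S.dtgt x)) :
      Homotopic K (ω₁.comp ω₂) (ω₁.comp ((Walk.retrace S x).comp ω₂))
  | cellDel {X Z W : S.V} (C : K.Cell) (ω : Walk S W W) (h : K.IsBdry C ⟨W, ω⟩)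
      (ω₁ : Walk S W Z) (ω₂ : Walk S X W) :
      Homotopic K (ω₁.comp (ω.comp ω₂)) (ω₁.comp ω₂)
  | cellIns {X Z W : S.V} (C : K.Cell) (ω : Walk S W W) (h : K.IsBdry C ⟨W, ω⟩)
      (ω₁ : Walk S W Z) (ω₂ : Walk S X W) :
      Homotopic K (ω₁.comp ω₂) (ω₁.comp (ω.comp ω₂))

theorem Walk.comp_assoc {S : Bigraph} {W X Y Z : S.V}
    (a : Walk S Y Z) (b : Walk S X Y) (c : Walk S W X) :
    (a.comp b).comp c = a.comp (b.comp c) := by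
  induction a with
  | nil => simp [Walk.comp]
  | cons x a ih => simp [Walk.comp, ih]

/-- Homotopy is compatible with composition on the left. -/
theorem Homotopic.compRight {S : Bigraph} {K : TwoComplex S} {X Y : S.V}
    {μ μ' : Walk S X Y} (h : Homotopic K μ μ') :
    ∀ {Z : S.V} (w : Walk S Y Z), Homotopic K (w.comp μ) (w.comp μ') := by
  induction h with
  | refl ω => exact fun w => .refl _
  | trans h₁ h₂ ih₁ ih₂ => exact fun w => .trans (ih₁ w) (ih₂ w)
  | cancel x ω₁ ω₂ =>
      intro Z w
      rw [← Walk.comp_assoc w ω₁ ((Walk.retrace S x).comp ω₂), ← Walk.comp_assoc w ω₁ ω₂]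
      exact .cancel x (w.comp ω₁) ω₂
  | insert x ω₁ ω₂ =>
      intro Z w
      rw [← Walk.comp_assoc w ω₁ ((Walk.retrace S x).comp ω₂), ← Walk.comp_assoc w ω₁ ω₂]
      exact .insert x (w.comp ω₁) ω₂
  | cellDel C ω hb ω₁ ω₂ =>
      intro Z w
      rw [← Walk.comp_assoc w ω₁ (ω.comp ω₂), ← Walk.comp_assoc w ω₁ ω₂]
      exact .cellDel C ω hb (w.comp ω₁) ω₂
  | cellIns C ω hb ω₁ ω₂ =>
      intro Z w
      rw [← Walk.comp_assoc w ω₁ (ω.comp ω₂), ← Walk.comp_assoc w ω₁ ω₂]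
      exact .cellIns C ω hb (w.comp ω₁) ω₂

/-- Homotopy is compatible with composition on the right. -/
theorem Homotopic.compLeft {S : Bigraph} {K : TwoComplex S} {Y Z : S.V}
    {μ μ' : Walk S Y Z} (h : Homotopic K μ μ') :
    ∀ {X : S.V} (w : Walk S X Y), Homotopic K (μ.comp w) (μ'.comp w) := by
  induction h with
  | refl ω => exact fun w => .refl _
  | trans h₁ h₂ ih₁ ih₂ => exact fun w => .trans (ih₁ w) (ih₂ w)
  | cancel x ω₁ ω₂ =>
      intro X w
      rw [Walk.comp_assoc ω₁ ((Walk.retrace S x).comp ω₂) w,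
        Walk.comp_assoc (Walk.retrace S x) ω₂ w, Walk.comp_assoc ω₁ ω₂ w]
      exact .cancel x ω₁ (ω₂.comp w)
  | insert x ω₁ ω₂ =>
      intro X w
      rw [Walk.comp_assoc ω₁ ((Walk.retrace S x).comp ω₂) w,
        Walk.comp_assoc (Walk.retrace S x) ω₂ w, Walk.comp_assoc ω₁ ω₂ w]
      exact .insert x ω₁ (ω₂.comp w)
  | cellDel C ω hb ω₁ ω₂ =>
      intro X w
      rw [Walk.comp_assoc ω₁ (ω.comp ω₂) w, Walk.comp_assoc ω ω₂ w,
        Walk.comp_assoc ω₁ ω₂ w]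
      exact .cellDel C ω hb ω₁ (ω₂.comp w)
  | cellIns C ω hb ω₁ ω₂ =>
      intro X w
      rw [Walk.comp_assoc ω₁ (ω.comp ω₂) w, Walk.comp_assoc ω ω₂ w,
        Walk.comp_assoc ω₁ ω₂ w]
      exact .cellIns C ω hb ω₁ (ω₂.comp w)

/-- The homotopy relation on walks from the base vertex `B` to `Y`. -/
def HRel {S : Bigraph} (K : TwoComplex S) (B Y : S.V) :
    Walk S B Y → Walk S B Y → Prop :=
  fun ω ω' => Homotopic K ω ω'

/-- The single-arrow walk. -/
def Walk.single (S : Bigraph) (x : S.A ⊕ S.A) : Walk S (S.dsrc x) (S.dtgt x) :=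
  .cons x .nil

/-- `[ω] ↦ [xω]`: extension of a homotopy class of walks from `B` by the arrow `x`. -/
def extendClass {S : Bigraph} (K : TwoComplex S) (B : S.V) (x : S.A) :
    Quot (HRel K B (S.src x)) → Quot (HRel K B (S.tgt x)) :=
  Quot.map (fun μ => (Walk.single S (.inl x)).comp μ) (fun _ _ h => h.compRight _)

/-- The underlying bigraph of the universal covering of the 2-complex `K` with base
vertex `B`: vertices are homotopy classes `[ω]` of walks starting at `B`, arrows are
pairs `([ω], x)` with `s(x) = e(ω)`, with source `[ω]`, target `[xω]`, and the degree
of `x`.  (The projection `π` sends `⟨Y, [ω]⟩` to `Y = e(ω)` and `⟨x, [ω]⟩` to `x`.) -/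
def UC {S : Bigraph} (K : TwoComplex S) (B : S.V) : Bigraph where
  V := Σ Y : S.V, Quot (HRel K B Y)
  A := Σ x : S.A, Quot (HRel K B (S.src x))
  src := fun a => ⟨S.src a.1, a.2⟩
  tgt := fun a => ⟨S.tgt a.1, extendClass K B a.1 a.2⟩
  deg := fun a => S.deg a.1

/-- The projection of the universal covering on walks, induced by
`π₀(⟨Y, [ω]⟩) = Y` and `π₁(⟨x, [ω]⟩) = x`. -/
def projW {S : Bigraph} (K : TwoComplex S) (B : S.V) {v : (UC K B).V} :
    {w : (UC K B).V} → Walk (UC K B) v w → Walk S v.1 w.1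
  | _, .nil => .nil
  | _, .cons (.inl a) ω => .cons (.inl a.1) (projW K B ω)
  | _, .cons (.inr a) ω => .cons (.inr a.1) (projW K B ω)

theorem projW_nil {S : Bigraph} (K : TwoComplex S) (B : S.V) {v : (UC K B).V} :
    projW K B (.nil : Walk (UC K B) v v) = .nil := rfl

theorem projW_cons_inl {S : Bigraph} (K : TwoComplex S) (B : S.V) {v : (UC K B).V}
    (a : (UC K B).A) (ω : Walk (UC K B) v ((UC K B).dsrc (Sum.inl a))) :
    projW K B (.cons (.inl a) ω) = .cons (.inl a.1) (projW K B ω) := rfl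

theorem projW_cons_inr {S : Bigraph} (K : TwoComplex S) (B : S.V) {v : (UC K B).V}
    (a : (UC K B).A) (ω : Walk (UC K B) v ((UC K B).dsrc (Sum.inr a))) :
    projW K B (.cons (.inr a) ω) = .cons (.inr a.1) (projW K B ω) := rfl

/-- The projection commutes with composition of walks. -/
theorem projW_comp {S : Bigraph} (K : TwoComplex S) (B : S.V)
    {u v w : (UC K B).V} (α : Walk (UC K B) v w) (β : Walk (UC K B) u v) :
    projW K B (α.comp β) = (projW K B α).comp (projW K B β) := by
  induction α with
  | nil => simp [Walk.comp, projW_nil]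
  | cons x α ih =>
      cases x with
      | inl a => simp [Walk.comp, projW_cons_inl, ih]; rfl
      | inr a => simp [Walk.comp, projW_cons_inr, ih]; rfl

/-- The projection of a cyclic walk of the covering. -/
def projCW {S : Bigraph} (K : TwoComplex S) (B : S.V) (w : CWalk (UC K B)) : CWalk S :=
  ⟨w.1.1, projW K B w.2⟩

/-- The projection commutes with cyclic rotation. -/
theorem projCW_rot {S : Bigraph} (K : TwoComplex S) (B : S.V)
    {w w' : CWalk (UC K B)} (h : RotStep (UC K B) w w') :
    RotStep S (projCW K B w) (projCW K B w') := by
  obtain ⟨X, Y, α, β, rfl, rfl⟩ := h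
  exact ⟨X.1, Y.1, projW K B α, projW K B β,
    congrArg (fun t => (⟨X.1, t⟩ : CWalk S)) (projW_comp K B β α),
    congrArg (fun t => (⟨Y.1, t⟩ : CWalk S)) (projW_comp K B α β)⟩

/-- The cycle `θ` of the covering projects to a representative of the boundary
cycle `∂(C)` of the base. -/
def liftedBdry {S : Bigraph} (K : TwoComplex S) (B : S.V) (C : K.Cell) :
    Quot (RotStep (UC K B)) → Prop :=
  Quot.lift (fun w => K.IsBdry C (projCW K B w)) (by
    intro a b h
    apply propext
    constructor
    · intro hb
      exact Relation.EqvGen.trans _ _ _ hb (Relation.EqvGen.rel _ _ (projCW_rot K B h))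
    · intro hb
      exact Relation.EqvGen.trans _ _ _ hb
        (Relation.EqvGen.symm _ _ (Relation.EqvGen.rel _ _ (projCW_rot K B h))))

/-- The 2-cells of the universal covering: pairs `C̃_θ = (C, θ)` of a 2-cell `C` of the
base and a cycle `θ` of the covering projecting to `∂(C)`; here `∂(C̃_θ) = θ` and
`π₂(C̃_θ) = C`. -/
def UCCell {S : Bigraph} (K : TwoComplex S) (B : S.V) : Type :=
  Σ C : K.Cell, { θ : Quot (RotStep (UC K B)) // liftedBdry K B C θ }

/-- The vertex `A` occurs on the walk `ω` (is incident to `ω`). -/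
def Walk.memV {S : Bigraph} (A : S.V) : {X Y : S.V} → Walk S X Y → Prop
  | X, _, .nil => A = X
  | _, _, .cons x ω => A = S.dtgt x ∨ Walk.memV A ω

/-- Right multiplication `[ω]·[ω_B] = [ωω_B]` of a homotopy class of walks starting
at the base vertex `B` by an element of the fundamental group `𝔤(Σ̄, B)`. -/
def cmul {S : Bigraph} (K : TwoComplex S) (B : S.V) {Y : S.V}
    (q : Quot (HRel K B Y)) (g : Quot (HRel K B B)) : Quot (HRel K B Y) :=
  Quot.lift
    (fun ωB => Quot.map (fun ω => ω.comp ωB) (fun _ _ h => h.compLeft ωB) q)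
    (fun a b hab => by
      induction q using Quot.ind with
      | _ ω => exact Quot.sound (hab.compRight ω))
    g

/-- The action of the fundamental group `𝔤(Σ̄, B)` on the vertices of the universal
covering: `[ω]·[ω_B] = [ωω_B]`. -/
def actV {S : Bigraph} (K : TwoComplex S) (B : S.V)
    (g : Quot (HRel K B B)) (v : (UC K B).V) : (UC K B).V :=
  ⟨v.1, cmul K B v.2 g⟩

/-- The induced action of the fundamental group on the arrows of the universal
covering: `([ω], x)·[ω_B] = ([ωω_B], x)`. -/
def actA {S : Bigraph} (K : TwoComplex S) (B : S.V)
    (g : Quot (HRel K B B)) (a : (UC K B).A) : (UC K B).A :=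
  ⟨a.1, cmul K B a.2 g⟩

theorem extend_cmul {S : Bigraph} (K : TwoComplex S) (B : S.V) (x : S.A)
    (q : Quot (HRel K B (S.src x))) (g : Quot (HRel K B B)) :
    extendClass K B x (cmul K B q g) = cmul K B (extendClass K B x q) g := by
  induction q using Quot.ind with
  | _ μ =>
    induction g using Quot.ind with
    | _ ωB => exact congrArg (Quot.mk _) (Walk.comp_assoc _ _ _).symm

theorem act_tgt {S : Bigraph} (K : TwoComplex S) (B : S.V)
    (g : Quot (HRel K B B)) (a : (UC K B).A) :
    (UC K B).tgt (actA K B g a) = actV K B g ((UC K B).tgt a) :=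
  congrArg (fun t => (⟨S.tgt a.1, t⟩ : (UC K B).V)) (extend_cmul K B a.1 a.2 g)

/-- The induced action of the fundamental group on the walks of the universal
covering. -/
def actW {S : Bigraph} (K : TwoComplex S) (B : S.V) (g : Quot (HRel K B B))
    {v : (UC K B).V} : {w : (UC K B).V} → Walk (UC K B) v w →
      Walk (UC K B) (actV K B g v) (actV K B g w)
  | _, .nil => .nil
  | _, .cons (.inl a) ω =>
      Walk.castTgt (act_tgt K B g a)
        (.cons (.inl (actA K B g a)) (actW K B g ω))
  | _, .cons (.inr a) ω =>
      .cons (.inr (actA K B g a))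
        (Walk.castTgt (act_tgt K B g a).symm (actW K B g ω))

noncomputable def orbitQuotEquiv {α β G : Type*} (act : G → α → α) (p : α → β)
    (hp : ∀ g a, p (act g a) = p a) (htrans : ∀ {a a'}, p a = p a' → ∃ g, act g a = a')
    (hsurj : Function.Surjective p) : Quot (fun a a' => ∃ g, act g a = a') ≃ β :=
  Equiv.ofBijective (Quot.lift p fun a _ ⟨g, hg⟩ => hg ▸ (hp g a).symm)
    ⟨fun x y => Quot.induction_on₂ x y fun _ _ h => Quot.sound (htrans h),
      (Quot.surjective_lift _).2 hsurj⟩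

section Walks

variable {S : Bigraph} (K : TwoComplex S)

theorem Walk.exists_comp_homotopic {X Y Z : S.V} (μ : Walk S X Y) (μ' : Walk S Z Y) :
    ∃ g : Walk S Z X, Homotopic K (μ.comp g) μ' := by
  -- `g = μ⁻¹ μ'`, built by moving the arrows of `μ` one at a time onto `μ'`
  induction μ with
  | nil => exact ⟨μ', .refl μ'⟩
  | cons x μ ih =>
    cases x with
    | inl a =>
      obtain ⟨g, hg⟩ := ih (.cons (.inr a) μ')
      exact ⟨g, (hg.compRight (Walk.single S (.inl a))).trans (.cancel (.inl a) .nil μ')⟩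
    | inr a =>
      obtain ⟨g, hg⟩ := ih (.cons (.inl a) μ')
      exact ⟨g, (hg.compRight (Walk.single S (.inr a))).trans (.cancel (.inr a) .nil μ')⟩

theorem Walk.castTgt_comp {X Y Z Z' : S.V} (h : Z = Z') (ω : Walk S Y Z) (ω' : Walk S X Y) :
    (ω.castTgt h).comp ω' = (ω.comp ω').castTgt h := by
  cases h; rfl

def Walk.uncons {X : S.V} : (Σ Y, Walk S X Y) → Option ((S.A ⊕ S.A) × Σ Y, Walk S X Y)
  | ⟨_, .nil⟩ => none
  | ⟨_, .cons x ω⟩ => some (x, ⟨_, ω⟩)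

instance : Std.Symm (RotStep S) where
  symm _ _ := fun ⟨X, Y, α, β, h, h'⟩ => ⟨Y, X, β, α, h', h⟩

end Walks

section Classes

variable {S : Bigraph} (K : TwoComplex S) (B : S.V)

def pushClass {X Y : S.V} (ω : Walk S X Y) : Quot (HRel K B X) → Quot (HRel K B Y) :=
  Quot.map ω.comp fun _ _ h => h.compRight ω

theorem pushClass_nil {X : S.V} (q : Quot (HRel K B X)) : pushClass K B .nil q = q := by
  induction q using Quot.ind; rfl

theorem pushClass_comp {X Y Z : S.V} (ω : Walk S Y Z) (ω' : Walk S X Y) (q : Quot (HRel K B X)) :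
    pushClass K B (ω.comp ω') q = pushClass K B ω (pushClass K B ω' q) := by
  induction q using Quot.ind
  exact congrArg (Quot.mk _) (Walk.comp_assoc _ _ _)

theorem pushClass_retrace (x : S.A ⊕ S.A) (q : Quot (HRel K B (S.dtgt x))) :
    pushClass K B (Walk.retrace S x) q = q := by
  induction q using Quot.ind with
  | _ μ => exact Quot.sound (Homotopic.cancel x .nil μ)

theorem pushClass_bdry (C : K.Cell) (q : Quot (HRel K B (K.bdry C).1)) :
    pushClass K B (K.bdry C).2 q = q := by
  induction q using Quot.ind with
  | _ μ => exact Quot.sound (Homotopic.cellDel C _ (.refl _) .nil μ)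

theorem pushClass_inr_extendClass (a : S.A) (q : Quot (HRel K B (S.src a))) :
    pushClass K B (Walk.single S (.inr a)) (extendClass K B a q) = q :=
  (pushClass_comp K B _ _ q).symm.trans (pushClass_retrace K B (.inr a) q)

theorem extendClass_injective (a : S.A) : Function.Injective (extendClass K B a) :=
  Function.LeftInverse.injective (pushClass_inr_extendClass K B a)

theorem extendClass_surjective (a : S.A) : Function.Surjective (extendClass K B a) :=
  fun q => ⟨pushClass K B (Walk.single S (.inr a)) q,
    (pushClass_comp K B (Walk.single S (.inl a)) _ q).symm.trans
      (pushClass_retrace K B (.inl a) q)⟩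

theorem exists_cmul_eq {Y : S.V} (q q' : Quot (HRel K B Y)) : ∃ g, cmul K B q g = q' := by
  induction q using Quot.ind with
  | _ μ =>
    induction q' using Quot.ind with
    | _ μ' =>
      obtain ⟨g, hg⟩ := Walk.exists_comp_homotopic K μ μ'
      exact ⟨Quot.mk _ g, Quot.sound hg⟩

end Classes

section Lifts

variable {S : Bigraph} (K : TwoComplex S) (B : S.V)

theorem projW_castTgt {v w w' : (UC K B).V} (h : w = w') (Θ : Walk (UC K B) v w) :
    projW K B (Θ.castTgt h) = (projW K B Θ).castTgt (congrArg Sigma.fst h) := by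
  cases h; rfl

theorem uncons_projW_nil (v : (UC K B).V) :
    Walk.uncons ⟨v.1, projW K B (.nil : Walk (UC K B) v v)⟩ = none := rfl

theorem uncons_projW_cons {v : (UC K B).V} (x : (UC K B).A ⊕ (UC K B).A)
    (Θ : Walk (UC K B) v ((UC K B).dsrc x)) :
    Walk.uncons ⟨_, projW K B (.cons x Θ)⟩ =
      some (Sum.map Sigma.fst Sigma.fst x, ⟨_, projW K B Θ⟩) := by
  cases x <;> rfl

theorem UC.darrow_ext {x x' : (UC K B).A ⊕ (UC K B).A}
    (h : Sum.map Sigma.fst Sigma.fst x = Sum.map Sigma.fst Sigma.fst x')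
    (hsrc : (UC K B).dsrc x = (UC K B).dsrc x') : x = x' := by
  rcases x with ⟨a, q⟩ | ⟨a, q⟩ <;> rcases x' with ⟨a', q'⟩ | ⟨a', q'⟩ <;> cases h
  · obtain rfl := eq_of_heq (Sigma.mk.inj hsrc).2
    rfl
  · obtain rfl := extendClass_injective K B a (eq_of_heq (Sigma.mk.inj hsrc).2)
    rfl

theorem exists_projW_eq (v : (UC K B).V) {Y : S.V} (ω : Walk S v.1 Y) :
    ∃ (q : Quot (HRel K B Y)) (Θ : Walk (UC K B) v ⟨Y, q⟩), projW K B Θ = ω := by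
  induction ω with
  | nil => exact ⟨v.2, .nil, rfl⟩
  | cons x ω ih =>
    obtain ⟨q, Θ, rfl⟩ := ih
    cases x with
    | inl a =>
      let ã : (UC K B).A := ⟨a, q⟩
      exact ⟨extendClass K B a q, .cons (.inl ã) Θ, rfl⟩
    | inr a =>
      obtain ⟨q', rfl⟩ := extendClass_surjective K B a q
      let ã : (UC K B).A := ⟨a, q'⟩
      exact ⟨q', .cons (.inr ã) Θ, rfl⟩

theorem sigma_eq_of_projW_eq {v u u' : (UC K B).V} (Θ : Walk (UC K B) v u)
    (Θ' : Walk (UC K B) v u')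
    (h : (⟨u.1, projW K B Θ⟩ : Σ Y, Walk S v.1 Y) = ⟨u'.1, projW K B Θ'⟩) :
    (⟨u, Θ⟩ : Σ w, Walk (UC K B) v w) = ⟨u', Θ'⟩ := by
  induction Θ generalizing u' with
  | nil =>
    cases Θ' with
    | nil => rfl
    | cons x' Θ' =>
      have h' := congrArg Walk.uncons h
      rw [uncons_projW_nil, uncons_projW_cons] at h'
      cases h'
  | cons x Θ ih =>
    cases Θ' with
    | nil =>
      have h' := congrArg Walk.uncons h
      rw [uncons_projW_nil, uncons_projW_cons] at h'
      cases h'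
    | cons x' Θ' =>
      have h' := congrArg Walk.uncons h
      rw [uncons_projW_cons, uncons_projW_cons, Option.some.injEq, Prod.mk.injEq] at h'
      have hΘ := ih Θ' h'.2
      obtain rfl := UC.darrow_ext K B h'.1 (congrArg Sigma.fst hΘ)
      obtain rfl := sigma_mk_injective hΘ
      rfl

theorem eq_of_projW_eq {v u : (UC K B).V} {Θ Θ' : Walk (UC K B) v u}
    (h : projW K B Θ = projW K B Θ') : Θ = Θ' :=
  sigma_mk_injective (sigma_eq_of_projW_eq K B Θ Θ' (congrArg (Sigma.mk u.1) h))

theorem snd_eq_pushClass_projW {v u : (UC K B).V} (Θ : Walk (UC K B) v u) :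
    u.2 = pushClass K B (projW K B Θ) v.2 := by
  induction Θ with
  | nil => exact (pushClass_nil K B v.2).symm
  | cons x Θ ih =>
    cases x with
    | inl a =>
      exact (congrArg (extendClass K B a.1) ih).trans
        (pushClass_comp K B (Walk.single S (.inl a.1)) _ _).symm
    | inr a =>
      exact (pushClass_inr_extendClass K B a.1 a.2).symm.trans
        ((congrArg (pushClass K B (Walk.single S (.inr a.1))) ih).trans
          (pushClass_comp K B _ _ _).symm)

theorem CWalk.eq_of_projCW_eq {w w' : CWalk (UC K B)} (h : w.1 = w'.1)
    (hproj : projCW K B w = projCW K B w') : w = w' := by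
  obtain ⟨v, θ⟩ := w
  obtain ⟨v', θ'⟩ := w'
  cases h
  obtain rfl := eq_of_projW_eq K B (eq_of_heq (Sigma.mk.inj hproj).2)
  rfl

theorem exists_rotStep_lift {v : (UC K B).V} (θ : Walk (UC K B) v v) {z : CWalk S}
    (h : RotStep S ⟨v.1, projW K B θ⟩ z) :
    ∃ w', RotStep (UC K B) ⟨v, θ⟩ w' ∧ projCW K B w' = z := by
  obtain ⟨X, Y, α, β, hw, rfl⟩ := h
  obtain ⟨rfl, hθ⟩ := Sigma.mk.inj hw
  obtain ⟨q, Θα, rfl⟩ := exists_projW_eq K B v α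
  obtain ⟨q', Θβ, rfl⟩ := exists_projW_eq K B ⟨Y, q⟩ β
  have hproj : projW K B (Θβ.comp Θα) = projW K B θ :=
    (projW_comp K B Θβ Θα).trans (eq_of_heq hθ).symm
  -- the lift of `βα` closes up because `θ` does
  obtain rfl : q' = v.2 :=
    (snd_eq_pushClass_projW K B (Θβ.comp Θα)).trans
      (hproj ▸ (snd_eq_pushClass_projW K B θ).symm)
  obtain rfl : θ = Θβ.comp Θα := eq_of_projW_eq K B hproj.symm
  exact ⟨⟨⟨Y, q⟩, Θα.comp Θβ⟩, ⟨v, ⟨Y, q⟩, Θα, Θβ, rfl, rfl⟩,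
    congrArg (Sigma.mk Y) (projW_comp K B Θα Θβ)⟩

theorem exists_rotation_lift (w : CWalk (UC K B)) {z : CWalk S}
    (h : Relation.ReflTransGen (RotStep S) (projCW K B w) z) :
    ∃ w', Relation.EqvGen (RotStep (UC K B)) w w' ∧ projCW K B w' = z := by
  induction h with
  | refl => exact ⟨w, .refl w, rfl⟩
  | tail _ hstep ih =>
    obtain ⟨w', hww', rfl⟩ := ih
    obtain ⟨w'', hstep', hproj⟩ := exists_rotStep_lift K B w'.2 hstep
    exact ⟨w'', .trans _ _ _ hww' (.rel _ _ hstep'), hproj⟩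

end Lifts

section Action

variable {S : Bigraph} (K : TwoComplex S) (B : S.V)

theorem actV_actV (ωB ωB' : Walk S B B) (v : (UC K B).V) :
    actV K B (Quot.mk _ ωB') (actV K B (Quot.mk _ ωB) v) =
      actV K B (Quot.mk _ (ωB.comp ωB')) v := by
  obtain ⟨Y, q⟩ := v
  induction q using Quot.ind with
  | _ ω =>
    exact congrArg (fun t => (⟨Y, Quot.mk _ t⟩ : (UC K B).V)) (Walk.comp_assoc ω ωB ωB')

theorem exists_actV_eq {v v' : (UC K B).V} (h : v.1 = v'.1) : ∃ g, actV K B g v = v' := by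
  obtain ⟨Y, q⟩ := v
  obtain ⟨Y', q'⟩ := v'
  cases h
  obtain ⟨g, hg⟩ := exists_cmul_eq K B q q'
  exact ⟨g, congrArg (Sigma.mk Y) hg⟩

theorem exists_actA_eq {a a' : (UC K B).A} (h : a.1 = a'.1) : ∃ g, actA K B g a = a' := by
  obtain ⟨x, q⟩ := a
  obtain ⟨x', q'⟩ := a'
  cases h
  obtain ⟨g, hg⟩ := exists_cmul_eq K B q q'
  exact ⟨g, congrArg (Sigma.mk x) hg⟩

theorem actW_comp (g : Quot (HRel K B B)) {u v w : (UC K B).V} (α : Walk (UC K B) v w)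
    (β : Walk (UC K B) u v) : actW K B g (α.comp β) = (actW K B g α).comp (actW K B g β) := by
  induction α with
  | nil => rfl
  | cons x α ih =>
    cases x with
    | inl a =>
      let ã := actA K B g a
      exact (congrArg (fun t => (Walk.cons (.inl ã) t).castTgt (act_tgt K B g a)) ih).trans
        (Walk.castTgt_comp (act_tgt K B g a) (.cons (.inl ã) (actW K B g α)) _).symm
    | inr a =>
      exact congrArg (Walk.cons (.inr (actA K B g a)))
        ((congrArg (Walk.castTgt (act_tgt K B g a).symm) ih).trans
          (Walk.castTgt_comp _ _ _).symm)

theorem projW_actW (g : Quot (HRel K B B)) {v w : (UC K B).V} (θ : Walk (UC K B) v w) :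
    projW K B (actW K B g θ) = projW K B θ := by
  induction θ with
  | nil => rfl
  | cons x θ ih =>
    cases x with
    | inl a =>
      exact (projW_castTgt K B (act_tgt K B g a) _).trans (congrArg (Walk.cons (.inl a.1)) ih)
    | inr a =>
      exact congrArg (Walk.cons (.inr a.1))
        ((projW_castTgt K B (act_tgt K B g a).symm _).trans ih)

def actCW (g : Quot (HRel K B B)) (w : CWalk (UC K B)) : CWalk (UC K B) :=
  ⟨actV K B g w.1, actW K B g w.2⟩

theorem projCW_actCW (g : Quot (HRel K B B)) (w : CWalk (UC K B)) :
    projCW K B (actCW K B g w) = projCW K B w :=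
  congrArg (Sigma.mk w.1.1) (projW_actW K B g w.2)

theorem RotStep.actCW (g : Quot (HRel K B B)) {w w' : CWalk (UC K B)}
    (h : RotStep (UC K B) w w') : RotStep (UC K B) (actCW K B g w) (actCW K B g w') := by
  obtain ⟨X, Y, α, β, rfl, rfl⟩ := h
  exact ⟨actV K B g X, actV K B g Y, actW K B g α, actW K B g β,
    congrArg (Sigma.mk _) (actW_comp K B g β α), congrArg (Sigma.mk _) (actW_comp K B g α β)⟩

def actCycle (g : Quot (HRel K B B)) : Quot (RotStep (UC K B)) → Quot (RotStep (UC K B)) :=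
  Quot.map (actCW K B g) fun _ _ => RotStep.actCW K B g

theorem liftedBdry_actCycle (C : K.Cell) (g : Quot (HRel K B B)) {θ : Quot (RotStep (UC K B))}
    (h : liftedBdry K B C θ) : liftedBdry K B C (actCycle K B g θ) := by
  induction θ using Quot.ind with
  | _ w =>
    show K.IsBdry C (projCW K B (actCW K B g w))
    rw [projCW_actCW]
    exact h

def actCell (g : Quot (HRel K B B)) (c : UCCell K B) : UCCell K B :=
  ⟨c.1, actCycle K B g c.2.1, liftedBdry_actCycle K B c.1 g c.2.2⟩

theorem exists_actCell_eq {c c' : UCCell K B} (h : c.1 = c'.1) : ∃ g, actCell K B g c = c' := by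
  obtain ⟨C, θ, hθ⟩ := c
  obtain ⟨C', θ', hθ'⟩ := c'
  cases h
  induction θ using Quot.ind with
  | _ w =>
    induction θ' using Quot.ind with
    | _ w' =>
      have hrot : Relation.ReflTransGen (RotStep S) (projCW K B w) (projCW K B w') := by
        rw [← Relation.EqvGen.eqvGen_eq_reflTransGen]
        exact .trans _ _ _ (.symm _ _ hθ) hθ'
      obtain ⟨w'', hww'', hproj⟩ := exists_rotation_lift K B w hrot
      obtain ⟨g, hg⟩ := exists_actV_eq K B (congrArg (·.1) hproj)
      have hgw : actCW K B g w'' = w' :=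
        CWalk.eq_of_projCW_eq K B hg ((projCW_actCW K B g w'').trans hproj)
      refine ⟨g, congrArg (Sigma.mk C) (Subtype.ext ?_)⟩
      show actCycle K B g (Quot.mk _ w) = Quot.mk _ w'
      rw [Quot.eqvGen_sound hww'']
      exact congrArg (Quot.mk _) hgw

end Action

section Surjectivity

variable {S : Bigraph} (K : TwoComplex S) {B : S.V}

theorem UC.fst_surjective_vertex (hB : ∀ Y, Nonempty (Walk S B Y)) :
    Function.Surjective (Sigma.fst : (UC K B).V → S.V) :=
  fun Y => ⟨⟨Y, Quot.mk _ (hB Y).some⟩, rfl⟩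

theorem UC.fst_surjective_arrow (hB : ∀ Y, Nonempty (Walk S B Y)) :
    Function.Surjective (Sigma.fst : (UC K B).A → S.A) :=
  fun x => ⟨⟨x, Quot.mk _ (hB (S.src x)).some⟩, rfl⟩

theorem UCCell.fst_surjective (hB : ∀ Y, Nonempty (Walk S B Y)) :
    Function.Surjective (Sigma.fst : UCCell K B → K.Cell) := by
  intro C
  let v : (UC K B).V := ⟨(K.bdry C).1, Quot.mk _ (hB _).some⟩
  obtain ⟨q, Θ, hΘ⟩ := exists_projW_eq K B v (K.bdry C).2
  obtain rfl : q = v.2 :=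
    (snd_eq_pushClass_projW K B Θ).trans (hΘ ▸ pushClass_bdry K B C v.2)
  refine ⟨⟨C, Quot.mk _ ⟨v, Θ⟩, ?_⟩, rfl⟩
  show K.IsBdry C ⟨_, projW K B Θ⟩
  rw [hΘ]
  exact .refl _

end Surjectivity

/-- The fundamental group `𝔤 = 𝔤(Σ̄, B)` acts on the universal covering `Σ̃̄` by
`[ω]·[ω_B] = [ωω_B]` on vertices (and correspondingly on arrows and 2-cells); the
action commutes with the structure maps (source, target, degree and boundary), the
quotient complex `Σ̃̄/𝔤` is defined, and the projection `π` induces an isomorphism of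
complexes between `Σ̃̄/𝔤` and `Σ̄`. -/
theorem stmt_9 {S : Bigraph} (K : TwoComplex S)
    (hconn : ∀ X Y : S.V, Nonempty (Walk S X Y)) (B : S.V) :
    -- the action on vertices is `[ω]·[ω_B] = [ωω_B]`, and it is an action
    (∀ (Y : S.V) (ω : Walk S B Y) (ωB : Walk S B B),
        actV K B (Quot.mk _ ωB) ⟨Y, Quot.mk _ ω⟩ = ⟨Y, Quot.mk _ (ω.comp ωB)⟩) ∧
    (∀ (ωB ωB' : Walk S B B) (v : (UC K B).V),
        actV K B (Quot.mk _ ωB') (actV K B (Quot.mk _ ωB) v) =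
          actV K B (Quot.mk _ (ωB.comp ωB')) v) ∧
    -- the action commutes with the source, target and degree maps of `Σ̃̄`
    (∀ (g : Quot (HRel K B B)) (a : (UC K B).A),
        (UC K B).src (actA K B g a) = actV K B g ((UC K B).src a) ∧
        (UC K B).tgt (actA K B g a) = actV K B g ((UC K B).tgt a) ∧
        (UC K B).deg (actA K B g a) = (UC K B).deg a) ∧
    -- the induced action on 2-cells commutes with `π₂` and with the boundary map
    (∃ actC : Quot (HRel K B B) → UCCell K B → UCCell K B,
      (∀ g c, (actC g c).1 = c.1) ∧
      (∀ (g : Quot (HRel K B B)) (c : UCCell K B) (w : CWalk (UC K B)),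
          Quot.mk _ w = c.2.1 →
          Quot.mk _ (⟨actV K B g w.1, actW K B g w.2⟩ : CWalk (UC K B)) = (actC g c).2.1) ∧
      -- hence the quotient complex `Σ̃̄/𝔤` is defined and `π` induces an isomorphism
      -- of complexes `Σ̃̄/𝔤 ≅ Σ̄`
      ∃ (fV : Quot (fun v v' : (UC K B).V => ∃ g, actV K B g v = v') ≃ S.V)
        (fA : Quot (fun a a' : (UC K B).A => ∃ g, actA K B g a = a') ≃ S.A)
        (fC : Quot (fun c c' : UCCell K B => ∃ g, actC g c = c') ≃ K.Cell),
        (∀ v : (UC K B).V, fV (Quot.mk _ v) = v.1) ∧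
        (∀ a : (UC K B).A, fA (Quot.mk _ a) = a.1) ∧
        (∀ c : UCCell K B, fC (Quot.mk _ c) = c.1) ∧
        (∀ a : (UC K B).A,
            S.src (fA (Quot.mk _ a)) = fV (Quot.mk _ ((UC K B).src a)) ∧
            S.tgt (fA (Quot.mk _ a)) = fV (Quot.mk _ ((UC K B).tgt a)) ∧
            S.deg (fA (Quot.mk _ a)) = (UC K B).deg a) ∧
        (∀ (c : UCCell K B) (w : CWalk (UC K B)), Quot.mk _ w = c.2.1 →
            K.IsBdry (fC (Quot.mk _ c)) (projCW K B w))) := by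
  refine ⟨fun _ _ _ => rfl, actV_actV K B, fun g a => ⟨rfl, act_tgt K B g a, rfl⟩,
    actCell K B, fun _ _ => rfl, ?_, ?_⟩
  · rintro g ⟨C, θ, _⟩ w rfl
    rfl
  · refine ⟨orbitQuotEquiv (actV K B) Sigma.fst (fun _ _ => rfl) (exists_actV_eq K B)
        (UC.fst_surjective_vertex K (hconn B)),
      orbitQuotEquiv (actA K B) Sigma.fst (fun _ _ => rfl) (exists_actA_eq K B)
        (UC.fst_surjective_arrow K (hconn B)),
      orbitQuotEquiv (actCell K B) Sigma.fst (fun _ _ => rfl) (exists_actCell_eq K B)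
        (UCCell.fst_surjective K (hconn B)),
      fun _ => rfl, fun _ => rfl, fun _ => rfl, fun _ => ⟨rfl, rfl, rfl⟩, ?_⟩
    rintro ⟨C, θ, hθ⟩ w rfl
    exact hθ
end
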